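/- arXiv:2212.05364 — 3 statements merged into one kernel-verified Lean document; each statement's English description precedes it below -/
import Mathlib

section
/- Let m > 0, p ≥ 0, and q be reals with p − q > 2, and let 0 < w < 1, γ > 0. Then the double series ∑_{k=1}^∞ ∑_{t=0}^{k−1} w^{k−2−t}(k−t) · (m+k)^q · γ/(m+t)^p converges (is finite). -/
/-!
Writing `y = m + t` and `d = k - t ≥ 1`, one has `(y + d) / y ≤ (1 + 1/m) d`, hence
`(m + k)^q / (m + t)^p ≤ (1 + 1/m)^p d^p (m + t)^(q - p)` when `q ≤ p`. So the inner sum is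
dominated by the Cauchy product of the `p`-series `(m + t)^(q - p)` (convergent as `q - p < -1`)
with the geometric-type series `d^(p + 1) w^d`, and Cauchy products of convergent nonnegative
series converge.
-/

open Real Finset

lemma summable_natCast_add_one_rpow_mul_pow (r : ℝ) {w : ℝ} (hw0 : 0 < w) (hw1 : w < 1) :
    Summable fun j : ℕ => ((j : ℝ) + 1) ^ r * w ^ j := by
  obtain ⟨n, hn⟩ := exists_nat_ge r
  have hshift : Summable fun j : ℕ => ((j : ℝ) + 1) ^ n * w ^ j * w := by
    have := (summable_nat_add_iff 1).mpr
      (summable_pow_mul_geometric_of_norm_lt_one n (by rwa [norm_of_nonneg hw0.le]) :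
        Summable fun j : ℕ => (j : ℝ) ^ n * w ^ j)
    simpa only [Nat.cast_add_one, pow_succ, mul_assoc] using this
  refine .of_nonneg_of_le (fun j => by positivity) (fun j => ?_)
    ((summable_mul_right_iff hw0.ne').mp hshift)
  have hj : (1 : ℝ) ≤ j + 1 := by simp
  gcongr
  exact_mod_cast rpow_le_rpow_of_exponent_le hj hn

lemma summable_add_natCast_rpow {m s : ℝ} (hm : 0 ≤ m) (hs : s < -1) :
    Summable fun t : ℕ => (m + t) ^ s := by
  have := (Real.summable_one_div_nat_add_rpow m (-s)).mpr (by linarith)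
  refine this.congr fun t => ?_
  rw [abs_of_nonneg (by positivity), one_div, ← rpow_neg (by positivity), neg_neg, add_comm]

lemma add_div_le_one_add_inv_mul {m y d : ℝ} (hm : 0 < m) (hmy : m ≤ y) (hd : 1 ≤ d) :
    (y + d) / y ≤ (1 + m⁻¹) * d := by
  have hy : 0 < y := hm.trans_le hmy
  calc (y + d) / y = 1 + d / y := by field_simp
    _ ≤ d + d / m := by gcongr
    _ = (1 + m⁻¹) * d := by ring

lemma add_rpow_div_rpow_le {m y d p q : ℝ} (hm : 0 < m) (hmy : m ≤ y) (hd : 1 ≤ d) (hp : 0 ≤ p)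
    (hqp : q ≤ p) : (y + d) ^ q / y ^ p ≤ (1 + m⁻¹) ^ p * d ^ p * y ^ (q - p) := by
  have hy : 0 < y := hm.trans_le hmy
  have hyd : 0 < y + d := by linarith
  calc (y + d) ^ q / y ^ p = (y + d) ^ (q - p) * ((y + d) / y) ^ p := by
        rw [div_rpow hyd.le hy.le, rpow_sub hyd]; field_simp
    _ ≤ y ^ (q - p) * ((1 + m⁻¹) * d) ^ p := by
        gcongr ?_ * ?_
        · exact rpow_le_rpow_of_nonpos hy (by linarith) (by linarith)
        · exact rpow_le_rpow (by positivity) (add_div_le_one_add_inv_mul hm hmy hd) hp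
    _ = (1 + m⁻¹) ^ p * d ^ p * y ^ (q - p) := by
        rw [mul_rpow (by positivity) (by linarith)]; ring

lemma summand_le_mul {m p q γ w : ℝ} (hm : 0 < m) (hp : 0 ≤ p) (hqp : q ≤ p) (hw0 : 0 < w)
    (hγ : 0 ≤ γ) {k t : ℕ} (ht : t ≤ k) :
    w ^ (((k : ℤ) + 1) - 2 - t) * (((k : ℝ) + 1) - t) * (m + (k + 1)) ^ q * (γ / (m + t) ^ p) ≤
      γ * (m + t) ^ (q - p) *
        ((1 + m⁻¹) ^ p * w⁻¹ * ((((k - t : ℕ) : ℝ) + 1) ^ (p + 1) * w ^ (k - t))) := by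
  obtain ⟨j, rfl⟩ := Nat.exists_eq_add_of_le ht
  set d : ℝ := (j : ℝ) + 1
  have hd : 1 ≤ d := by simp [d]
  have hzpow : w ^ (((t + j : ℕ) : ℤ) + 1 - 2 - t) = w⁻¹ * w ^ j := by
    rw [show ((t + j : ℕ) : ℤ) + 1 - 2 - t = (j : ℤ) - 1 by push_cast; ring,
      zpow_sub_one₀ hw0.ne', zpow_natCast, mul_comm]
  have hbase : m + ((t + j : ℕ) + 1 : ℝ) = (m + t) + d := by push_cast [d]; ring
  have hkey := add_rpow_div_rpow_le hm (le_add_of_nonneg_right (Nat.cast_nonneg t)) hd hp hqp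
  rw [hzpow, Nat.add_sub_cancel_left, hbase,
    show ((t + j : ℕ) : ℝ) + 1 - t = d by push_cast [d]; ring,
    rpow_add (by positivity), rpow_one]
  calc w⁻¹ * w ^ j * d * (m + t + d) ^ q * (γ / (m + t) ^ p)
      = γ * (w⁻¹ * w ^ j * d) * ((m + t + d) ^ q / (m + t) ^ p) := by ring
    _ ≤ γ * (w⁻¹ * w ^ j * d) * ((1 + m⁻¹) ^ p * d ^ p * (m + t) ^ (q - p)) := by gcongr
    _ = _ := by ring

/-- For reals `m > 0`, `p ≥ 0`, `q` with `p - q > 2`, and `0 < w < 1`, `γ > 0`, the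
nonnegative double series `∑_{k=1}^∞ ∑_{t=0}^{k-1} w^(k-2-t) (k-t) (m+k)^q γ/(m+t)^p`
converges. -/
theorem double_series_summable (m p q γ w : ℝ) (hm : 0 < m) (hp : 0 ≤ p) (hpq : p - q > 2)
    (hw0 : 0 < w) (hw1 : w < 1) (hγ : 0 < γ) :
    Summable (fun k : ℕ =>
      ∑ t ∈ Finset.range (k + 1),
        w ^ (((k : ℤ) + 1) - 2 - t) * (((k : ℝ) + 1) - t) * (m + (k + 1)) ^ q *
          (γ / (m + t) ^ p)) := by
  set f : ℕ → ℝ := fun t => γ * (m + t) ^ (q - p)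
  set g : ℕ → ℝ := fun j => (1 + m⁻¹) ^ p * w⁻¹ * (((j : ℝ) + 1) ^ (p + 1) * w ^ j)
  have hf : Summable f := (summable_add_natCast_rpow hm.le (by linarith)).mul_left γ
  have hg : Summable g := (summable_natCast_add_one_rpow_mul_pow (p + 1) hw0 hw1).mul_left _
  have hfg : Summable fun k => ∑ t ∈ range (k + 1), f t * g (k - t) :=
    summable_sum_mul_range_of_summable_mul
      (hf.mul_of_nonneg hg (fun t => by positivity) (fun j => by positivity))
  refine hfg.of_nonneg_of_le (fun k => sum_nonneg fun t ht => ?_)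
    (fun k => sum_le_sum fun t ht => summand_le_mul hm hp (by linarith) hw0 hγ.le
      (Nat.lt_succ_iff.mp (mem_range.mp ht)))
  have htk : (t : ℝ) ≤ k := by exact_mod_cast Nat.lt_succ_iff.mp (mem_range.mp ht)
  have : 0 ≤ ((k : ℝ) + 1) - t := by linarith
  positivity
end

section
/- Let 0 < p < l ≤ 1 be reals and define φ(ℓ) = ℓ^{l+p}/(ℓ+1)^l − ℓ^p for ℓ > 0. Then for all ℓ ≥ p/(l−p), φ'(ℓ) ≥ 0, i.e., φ is nondecreasing on [p/(l−p), ∞). -/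
/-!
Away from `0` the derivative factors as
`φ'(x) = x^p / (x (x+1) (x+1)^l) · (x^l (p x + l + p) - p (x+1)^l (x+1))`.
Since `l ≤ 1`, `(x/(x+1))^l ≥ x/(x+1)`, i.e. `x (x+1)^l ≤ x^l (x+1)`; and `x ≥ p/(l-p)` is exactly
`p (x+1)² ≤ x (p x + l + p)`. Chaining the two makes the second factor nonnegative.
-/

open Real Set

noncomputable def phi (p l x : ℝ) : ℝ := x ^ (l + p) / (x + 1) ^ l - x ^ p

lemma mul_add_one_rpow_le_rpow_mul_add_one {x l : ℝ} (hx : 0 < x) (hl : l ≤ 1) :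
    x * (x + 1) ^ l ≤ x ^ l * (x + 1) := by
  have hx1 : 0 < x + 1 := by linarith
  have hratio : x / (x + 1) ≤ (x / (x + 1)) ^ l := by
    simpa using rpow_le_rpow_of_exponent_ge (div_pos hx hx1)
      ((div_le_one hx1).2 (by linarith)) hl
  rw [div_rpow hx.le hx1.le, div_le_div_iff₀ hx1 (rpow_pos_of_pos hx1 l)] at hratio
  linarith

lemma hasDerivAt_phi (p l : ℝ) {x : ℝ} (hx : 0 < x) :
    HasDerivAt (phi p l)
      (x ^ p / (x * (x + 1) * (x + 1) ^ l) *
        (x ^ l * (p * x + l + p) - p * (x + 1) ^ l * (x + 1))) x := by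
  have hx1 : 0 < x + 1 := by linarith
  have hB : 0 < (x + 1) ^ l := rpow_pos_of_pos hx1 l
  have hsum : x ^ (l + p) = x ^ l * x ^ p := rpow_add hx l p
  have hrpow_sub_one (r : ℝ) {y : ℝ} (hy : 0 < y) : y ^ (r - 1) = y ^ r / y := rpow_sub_one hy.ne' r
  refine (((hasDerivAt_rpow_const (p := l + p) (Or.inl hx.ne')).div
    (((hasDerivAt_id x).add_const 1).rpow_const (p := l) (Or.inl hx1.ne')) hB.ne').sub
    (hasDerivAt_rpow_const (p := p) (Or.inl hx.ne'))).congr_deriv ?_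
  simp only [id, hrpow_sub_one _ hx, hrpow_sub_one _ hx1, hsum]
  field_simp
  ring

lemma phi_deriv_numerator_nonneg {p l x : ℝ} (hp : 0 < p) (hpl : p < l) (hl : l ≤ 1)
    (hx : p / (l - p) ≤ x) : 0 ≤ x ^ l * (p * x + l + p) - p * (x + 1) ^ l * (x + 1) := by
  have hx0 : 0 < x := (div_pos hp (sub_pos.2 hpl)).trans_le hx
  have hx1 : 0 < x + 1 := by linarith
  have hquad : p * (x + 1) ^ 2 ≤ x * (p * x + l + p) := by
    rw [div_le_iff₀ (sub_pos.2 hpl)] at hx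
    nlinarith
  have hlin : 0 ≤ p * x + l + p := by nlinarith [mul_pos hp hx0]
  refine sub_nonneg.2 (le_of_mul_le_mul_right ?_ hx1)
  calc p * (x + 1) ^ l * (x + 1) * (x + 1) = p * (x + 1) ^ 2 * (x + 1) ^ l := by ring
    _ ≤ x * (p * x + l + p) * (x + 1) ^ l := by gcongr
    _ = x * (x + 1) ^ l * (p * x + l + p) := by ring
    _ ≤ x ^ l * (x + 1) * (p * x + l + p) :=
        mul_le_mul_of_nonneg_right (mul_add_one_rpow_le_rpow_mul_add_one hx0 hl) hlin
    _ = x ^ l * (p * x + l + p) * (x + 1) := by ring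

lemma phi_deriv_nonneg {p l x : ℝ} (hp : 0 < p) (hpl : p < l) (hl : l ≤ 1)
    (hx : p / (l - p) ≤ x) : 0 ≤ deriv (phi p l) x := by
  have hx0 : 0 < x := (div_pos hp (sub_pos.2 hpl)).trans_le hx
  rw [(hasDerivAt_phi p l hx0).deriv]
  have := phi_deriv_numerator_nonneg hp hpl hl hx
  positivity

/-- For reals `0 < p < l ≤ 1` and `φ ℓ = ℓ^(l+p)/(ℓ+1)^l - ℓ^p`, the derivative of `φ`
is nonnegative for all `ℓ ≥ p/(l-p)`, and `φ` is nondecreasing on `[p/(l-p), ∞)`. -/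
theorem phi_monotone (p l : ℝ) (hp : 0 < p) (hpl : p < l) (hl : l ≤ 1) :
    (∀ ℓ : ℝ, p / (l - p) ≤ ℓ →
        0 ≤ deriv (fun x : ℝ => x ^ (l + p) / (x + 1) ^ l - x ^ p) ℓ) ∧
    MonotoneOn (fun x : ℝ => x ^ (l + p) / (x + 1) ^ l - x ^ p)
      (Set.Ici (p / (l - p))) := by
  change (∀ ℓ, p / (l - p) ≤ ℓ → 0 ≤ deriv (phi p l) ℓ) ∧
    MonotoneOn (phi p l) (Ici (p / (l - p)))
  have hpos : ∀ x ∈ Ici (p / (l - p)), 0 < x := fun x hx =>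
    (div_pos hp (sub_pos.2 hpl)).trans_le hx
  have hdiff : ∀ x ∈ Ici (p / (l - p)), DifferentiableAt ℝ (phi p l) x := fun x hx =>
    (hasDerivAt_phi p l (hpos x hx)).differentiableAt
  refine ⟨fun x hx => phi_deriv_nonneg hp hpl hl hx, ?_⟩
  refine monotoneOn_of_deriv_nonneg (convex_Ici _)
    (fun x hx => (hdiff x hx).continuousAt.continuousWithinAt)
    (fun x hx => (hdiff x (interior_subset hx)).differentiableWithinAt) fun x hx => ?_
  exact phi_deriv_nonneg hp hpl hl (interior_subset (s := Ici _) hx)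
end

section
/- Let A be an irreducible nonnegative 3×3 matrix. Then ρ(A) < 1 if and only if A_{11} < 1, A_{22} < 1, A_{33} < 1, and det(I − A) > 0. -/
/-!
Write `B` for `A` viewed as a complex matrix. If `ρ(B) < 1`, every real root of the
characteristic polynomial of `A` is `< 1`, so the monic polynomial `det (t • 1 - A)` is positive
at `t = 1`; and Gelfand's formula with `(A ^ k)ᵢᵢ ≥ Aᵢᵢ ^ k` gives `Aᵢᵢ ≤ ρ(B)`.

Conversely, for a nonnegative `3 × 3` matrix with `Aᵢᵢ ≤ 1` the off-diagonal entries of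
`adj (1 - A)` are nonnegative, and expanding `det (1 - A)` along a row shows that its diagonal
entries are positive when `det (1 - A) > 0` and `Aᵢᵢ < 1`. Then `x = adj (1 - A) *ᵥ 1` is a
positive vector with `A *ᵥ x = x - det (1 - A) • 1 < x`, and a positive vector that `A` shrinks
in every coordinate bounds `ρ(B)` below `1`.
-/

open Polynomial

namespace Matrix

open scoped Matrix.Norms.Operator in
theorem norm_apply_le_linfty_opNorm {m n α : Type*} [Fintype m] [Fintype n]
    [SeminormedAddCommGroup α] (B : Matrix m n α) (i : m) (j : n) : ‖B i j‖ ≤ ‖B‖ := by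
  rw [linfty_opNorm_def, ← coe_nnnorm, NNReal.coe_le_coe]
  exact (Finset.single_le_sum (f := fun j => ‖B i j‖₊) (fun _ _ => bot_le)
    (Finset.mem_univ j)).trans
      (Finset.le_sup (f := fun i => ∑ j, ‖B i j‖₊) (Finset.mem_univ i))

variable {n : Type*} [Fintype n]

theorem norm_le_of_mulVec_eq_smul {A : Matrix n n ℝ} (hA : ∀ i j, 0 ≤ A i j)
    {x : n → ℝ} (hx : ∀ i, 0 < x i) {s : ℝ} (hAx : ∀ i, (A *ᵥ x) i ≤ s * x i)
    {μ : ℂ} {v : n → ℂ} (hv0 : v ≠ 0) (hv : A.map (Complex.ofReal ·) *ᵥ v = μ • v) : ‖μ‖ ≤ s := by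
  obtain ⟨k, hk⟩ := Function.ne_iff.mp hv0
  obtain ⟨i, -, hi⟩ := Finset.exists_max_image Finset.univ (fun j => ‖v j‖ / x j)
    ⟨k, Finset.mem_univ k⟩
  set c := ‖v i‖ / x i
  have hvc : ∀ j, ‖v j‖ ≤ c * x j := fun j =>
    (div_le_iff₀ (hx j)).mp (hi j (Finset.mem_univ j))
  have hvi : ‖v i‖ = c * x i := (div_mul_cancel₀ _ (hx i).ne').symm
  have hc : 0 < c :=
    (div_pos (norm_pos_iff.mpr hk) (hx k)).trans_le (hi k (Finset.mem_univ k))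
  refine le_of_mul_le_mul_right ?_ (hvi ▸ mul_pos hc (hx i))
  calc ‖μ‖ * ‖v i‖ = ‖∑ j, (A i j : ℂ) * v j‖ := by
        rw [← norm_mul, ← smul_eq_mul, ← Pi.smul_apply μ v i, ← hv]
        rfl
    _ ≤ ∑ j, A i j * ‖v j‖ := by
        refine (norm_sum_le _ _).trans_eq (Finset.sum_congr rfl fun j _ => ?_)
        rw [norm_mul, Complex.norm_real, Real.norm_of_nonneg (hA i j)]
    _ ≤ ∑ j, A i j * (c * x j) := by gcongr with j; exacts [hA i j, hvc j]
    _ = c * (A *ᵥ x) i := by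
        rw [mulVec, dotProduct, Finset.mul_sum]
        exact Finset.sum_congr rfl fun j _ => by ring
    _ ≤ c * (s * x i) := mul_le_mul_of_nonneg_left (hAx i) hc.le
    _ = s * ‖v i‖ := by rw [hvi]; ring

variable [DecidableEq n]

theorem spectralRadius_le_of_mulVec_le {A : Matrix n n ℝ} (hA : ∀ i j, 0 ≤ A i j)
    {x : n → ℝ} (hx : ∀ i, 0 < x i) {s : ℝ} (hAx : ∀ i, (A *ᵥ x) i ≤ s * x i) :
    spectralRadius ℂ (A.map (Complex.ofReal ·)) ≤ ENNReal.ofReal s := by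
  refine iSup₂_le fun μ hμ => ?_
  rw [← spectrum_toLin', ← Module.End.hasEigenvalue_iff_mem_spectrum] at hμ
  obtain ⟨v, hv⟩ := hμ.exists_hasEigenvector
  rw [Module.End.hasEigenvector_iff, Module.End.mem_eigenspace_iff, toLin'_apply] at hv
  rw [← enorm_eq_nnnorm, ← ofReal_norm]
  exact ENNReal.ofReal_le_ofReal (norm_le_of_mulVec_eq_smul hA hx hAx hv.2 hv.1)

theorem spectralRadius_lt_one_of_mulVec_lt {A : Matrix n n ℝ} (hA : ∀ i j, 0 ≤ A i j)
    {x : n → ℝ} (hx : ∀ i, 0 < x i) (hAx : ∀ i, (A *ᵥ x) i < x i) :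
    spectralRadius ℂ (A.map (Complex.ofReal ·)) < 1 := by
  obtain ⟨s, hs1, hs⟩ : ∃ s < 1, ∀ i, (A *ᵥ x) i ≤ s * x i := by
    cases isEmpty_or_nonempty n
    · exact ⟨0, one_pos, fun i => isEmptyElim i⟩
    · obtain ⟨i, -, hi⟩ := Finset.exists_max_image Finset.univ (fun j => (A *ᵥ x) j / x j)
        Finset.univ_nonempty
      exact ⟨_, (div_lt_one (hx i)).mpr (hAx i),
        fun j => (div_le_iff₀ (hx j)).mp (hi j (Finset.mem_univ j))⟩
  exact (spectralRadius_le_of_mulVec_le hA hx hs).trans_lt (ENNReal.ofReal_lt_one.mpr hs1)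

theorem apply_self_pow_le_pow_apply_self {R : Type*} [Semiring R] [PartialOrder R]
    [IsOrderedRing R] {A : Matrix n n R} (hA : ∀ i j, 0 ≤ A i j) (k : ℕ) (i : n) :
    A i i ^ k ≤ (A ^ k) i i := by
  induction k with
  | zero => simp
  | succ k ih =>
    rw [pow_succ, pow_succ, mul_apply]
    calc A i i ^ k * A i i ≤ (A ^ k) i i * A i i := mul_le_mul_of_nonneg_right ih (hA i i)
      _ ≤ ∑ l, (A ^ k) i l * A l i :=
        Finset.single_le_sum (f := fun l => (A ^ k) i l * A l i)
          (fun l _ => mul_nonneg (pow_apply_nonneg hA k i l) (hA l i)) (Finset.mem_univ i)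

open scoped Matrix.Norms.Operator in
theorem ofReal_apply_self_le_spectralRadius {A : Matrix n n ℝ} (hA : ∀ i j, 0 ≤ A i j)
    (i : n) : ENNReal.ofReal (A i i) ≤ spectralRadius ℂ (A.map (Complex.ofReal ·)) := by
  refine ge_of_tendsto (spectrum.pow_norm_pow_one_div_tendsto_nhds_spectralRadius _) ?_
  filter_upwards [Filter.eventually_ne_atTop 0] with k hk
  refine ENNReal.ofReal_le_ofReal ?_
  have hentry : A i i ^ k ≤ ‖(A.map (Complex.ofReal ·)) ^ k‖ :=
    calc A i i ^ k ≤ (A ^ k) i i := apply_self_pow_le_pow_apply_self hA k i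
      _ = ‖((A.map Complex.ofRealHom) ^ k) i i‖ := by
        rw [← Matrix.map_pow, map_apply, Complex.ofRealHom_eq_coe, Complex.norm_real,
          Real.norm_of_nonneg (pow_apply_nonneg hA k i i)]
      _ ≤ ‖(A.map (Complex.ofReal ·)) ^ k‖ := norm_apply_le_linfty_opNorm _ i i
  calc A i i = (A i i ^ k) ^ (1 / k : ℝ) := by
        rw [one_div, Real.pow_rpow_inv_natCast (hA i i) hk]
    _ ≤ _ := Real.rpow_le_rpow (pow_nonneg (hA i i) k) hentry (by positivity)

theorem nnnorm_le_spectralRadius_of_isRoot_charpoly (A : Matrix n n ℝ) {y : ℝ}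
    (hy : A.charpoly.IsRoot y) :
    (‖y‖₊ : ENNReal) ≤ spectralRadius ℂ (A.map (Complex.ofReal ·)) := by
  have hmem : (y : ℂ) ∈ spectrum ℂ (A.map (Complex.ofReal ·)) := by
    rw [mem_spectrum_iff_isRoot_charpoly,
      show A.map (Complex.ofReal ·) = A.map Complex.ofRealHom from rfl, charpoly_map, IsRoot,
      eval_map, ← Complex.ofRealHom_eq_coe, eval₂_at_apply, hy.eq_zero, map_zero]
  simpa using not_lt.mp fun h => hmem (spectrum.mem_resolventSet_of_spectralRadius_lt h)

theorem det_one_sub_pos_of_spectralRadius_lt_one (A : Matrix n n ℝ)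
    (hA : spectralRadius ℂ (A.map (Complex.ofReal ·)) < 1) : 0 < (1 - A).det := by
  have hroots : ∀ y, A.charpoly.IsRoot y → y < 1 := fun y hy => by
    have := (nnnorm_le_spectralRadius_of_isRoot_charpoly A hy).trans_lt hA
    rw [ENNReal.coe_lt_one_iff, ← NNReal.coe_lt_one, coe_nnnorm, Real.norm_eq_abs] at this
    exact (le_abs_self y).trans_lt this
  have := zero_lt_eval_of_roots_lt_of_leadingCoeff_nonneg hroots
    (by simp [(charpoly_monic A).leadingCoeff])
  rwa [eval_charpoly, scalar_apply, diagonal_one] at this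

theorem mulVec_adjugate_one_sub_mulVec {R : Type*} [CommRing R] (A : Matrix n n R)
    (v : n → R) :
    A *ᵥ (adjugate (1 - A) *ᵥ v) = adjugate (1 - A) *ᵥ v - (1 - A).det • v := by
  have h : (1 - A) *ᵥ (adjugate (1 - A) *ᵥ v) = (1 - A).det • v := by
    rw [mulVec_mulVec, mul_adjugate, smul_mulVec, one_mulVec]
  rw [sub_mulVec, one_mulVec] at h
  rw [← h, sub_sub_cancel]

theorem adjugate_one_sub_apply_self_pos {A : Matrix n n ℝ} (hA : ∀ i j, 0 ≤ A i j) {i : n}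
    (hii : A i i < 1) (hadj : ∀ j ≠ i, 0 ≤ adjugate (1 - A) j i) (hdet : 0 < (1 - A).det) :
    0 < adjugate (1 - A) i i := by
  have hrow : (1 - A).det ≤ (1 - A i i) * adjugate (1 - A) i i := by
    have h := congrFun (congrFun (mul_adjugate (1 - A)) i) i
    rw [mul_apply, ← Finset.add_sum_erase _ _ (Finset.mem_univ i), sub_apply 1 A i i,
      one_apply_eq, smul_apply, one_apply_eq, smul_eq_mul, mul_one] at h
    have hoff : ∑ j ∈ Finset.univ.erase i, (1 - A) i j * adjugate (1 - A) j i ≤ 0 :=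
      Finset.sum_nonpos fun j hj => by
        have hji := Finset.ne_of_mem_erase hj
        rw [sub_apply, one_apply_ne hji.symm, zero_sub, neg_mul]
        exact neg_nonpos.mpr (mul_nonneg (hA i j) (hadj j hji))
    linarith
  exact (mul_pos_iff_of_pos_left (sub_pos.mpr hii)).mp (hdet.trans_le hrow)

theorem adjugate_one_sub_mulVec_one_pos {A : Matrix n n ℝ} (hA : ∀ i j, 0 ≤ A i j)
    (hdiag : ∀ i, A i i < 1) (hoff : ∀ i j, i ≠ j → 0 ≤ adjugate (1 - A) i j)
    (hdet : 0 < (1 - A).det) (i : n) : 0 < (adjugate (1 - A) *ᵥ fun _ => 1) i := by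
  have hpos : ∀ i, 0 < adjugate (1 - A) i i := fun i =>
    adjugate_one_sub_apply_self_pos hA (hdiag i) (fun j hj => hoff j i hj) hdet
  have hnonneg : ∀ j, 0 ≤ adjugate (1 - A) i j := fun j => by
    rcases eq_or_ne i j with rfl | hij
    exacts [(hpos i).le, hoff i j hij]
  simp only [mulVec, dotProduct, mul_one]
  exact Finset.sum_pos' (fun j _ => hnonneg j) ⟨i, Finset.mem_univ i, hpos i⟩

theorem adjugate_one_sub_apply_nonneg_of_ne {A : Matrix (Fin 3) (Fin 3) ℝ}
    (hA : ∀ i j, 0 ≤ A i j) (hdiag : ∀ i, A i i ≤ 1) {i j : Fin 3} (hij : i ≠ j) :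
    0 ≤ adjugate (1 - A) i j := by
  fin_cases i <;> fin_cases j <;> simp [adjugate_fin_three] at hij ⊢ <;>
    apply add_nonneg <;> apply mul_nonneg <;> simp only [sub_nonneg, hA, hdiag]

end Matrix

open Matrix

theorem spectral_radius_lt_one_iff_general (A : Matrix (Fin 3) (Fin 3) ℝ)
    (hnonneg : ∀ i j, 0 ≤ A i j) :
    spectralRadius ℂ (A.map (Complex.ofReal ·)) < 1 ↔
      A 0 0 < 1 ∧ A 1 1 < 1 ∧ A 2 2 < 1 ∧ 0 < (1 - A).det := by
  constructor
  · intro h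
    have hdiag : ∀ i, A i i < 1 := fun i =>
      ENNReal.ofReal_lt_one.mp ((ofReal_apply_self_le_spectralRadius hnonneg i).trans_lt h)
    exact ⟨hdiag 0, hdiag 1, hdiag 2, det_one_sub_pos_of_spectralRadius_lt_one A h⟩
  · rintro ⟨h0, h1, h2, hdet⟩
    have hdiag : ∀ i, A i i < 1 := by intro i; fin_cases i <;> assumption
    have hoff : ∀ i j, i ≠ j → 0 ≤ adjugate (1 - A) i j := fun _ _ =>
      adjugate_one_sub_apply_nonneg_of_ne hnonneg fun k => (hdiag k).le
    refine spectralRadius_lt_one_of_mulVec_lt hnonneg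
      (adjugate_one_sub_mulVec_one_pos hnonneg hdiag hoff hdet) fun i => ?_
    rw [mulVec_adjugate_one_sub_mulVec]
    simpa using hdet

/-- For an irreducible nonnegative 3×3 real matrix `A`, the spectral radius of `A` is
less than `1` iff `A₁₁ < 1`, `A₂₂ < 1`, `A₃₃ < 1`, and `det (I - A) > 0`. -/
theorem spectral_radius_lt_one_iff (A : Matrix (Fin 3) (Fin 3) ℝ)
    (hnonneg : ∀ i j, 0 ≤ A i j)
    (hirred : ∀ i j, ∃ k : ℕ, 0 < k ∧ 0 < (A ^ k) i j) :
    spectralRadius ℂ (A.map (Complex.ofReal ·)) < 1 ↔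
      A 0 0 < 1 ∧ A 1 1 < 1 ∧ A 2 2 < 1 ∧ 0 < (1 - A).det :=
  spectral_radius_lt_one_iff_general A hnonneg
end
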